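/- For N spare-parts warehouses with a common unknown Poisson demand rate, for every t ∈ {0,1,…,T}, every vector of net inventory levels x = (x_1,…,x_N) ∈ ℤ^N, and every k ∈ ℕ, the value function of the joint N-warehouse Markov decision process decomposes as V_t(x,k) = ∑_{i=1}^N W^i_t(x_i,k), where W^i is the two-dimensional single-warehouse value function of warehouse i. -/

import Mathlib

open Filter

/-- Negative Binomial pmf with real shape `r` and success probability `p`:
`NB(r,p)(z) = Γ(z+r)/(Γ(r)·z!)·p^r·(1−p)^z` for `r > 0`, and `NB(0,p)` is
the point mass at `0`. -/
noncomputable def NB (r p : ℝ) (z : ℕ) : ℝ :=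
  if r = 0 then (if z = 0 then (1 : ℝ) else 0)
  else Real.Gamma ((z : ℝ) + r) / (Real.Gamma r * (Nat.factorial z : ℝ)) * p ^ r * (1 - p) ^ z

/-- `p_t = (β0 + N·t)/(β0 + N·t + 1)`. -/
noncomputable def pt (β0 : ℝ) (N t : ℕ) : ℝ :=
  (β0 + (N : ℝ) * (t : ℝ)) / (β0 + (N : ℝ) * (t : ℝ) + 1)

/-- Expectation `E_{(Z,K)}[f(Z,K)]` with `Z ~ NB(α0+k, p_t)` and
`K ~ NB((N−1)(α0+k), p_t)` independent. -/
noncomputable def EZK (α0 β0 : ℝ) (N t k : ℕ) (f : ℕ → ℕ → ℝ) : ℝ :=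
  ∑' z : ℕ, ∑' κ : ℕ,
    NB (α0 + (k : ℝ)) (pt β0 N t) z * NB (((N : ℝ) - 1) * (α0 + (k : ℝ))) (pt β0 N t) κ * f z κ

/-- Per-warehouse one-period cost of ordering up to `a` from `x` at stage `(t,k)`. -/
noncomputable def Cost (α0 β0 : ℝ) (N : ℕ) (cv ch cb : ℝ) (t : ℕ) (a x : ℤ) (k : ℕ) : ℝ :=
  cv * ((a : ℝ) - (x : ℝ))
    + ch * ∑' z : ℕ, NB (α0 + (k : ℝ)) (pt β0 N t) z * max ((a : ℝ) - (z : ℝ)) 0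
    + cb * ∑' z : ℕ, NB (α0 + (k : ℝ)) (pt β0 N t) z * max ((z : ℝ) - (a : ℝ)) 0

/-!
By backward induction `V_{t+1}(y, k') = ∑ᵢ W^i_{t+1}(yᵢ, k')`, so the expected future cost of the
joint problem is a sum over warehouses. Under the product of `NB(α0 + k, p_t)` demands, the pair
`(zᵢ, ∑ⱼ zⱼ)` is distributed as `(Z, Z + K)` with `Z ~ NB(α0 + k, p_t)` and
`K ~ NB((N - 1)(α0 + k), p_t)` independent, because negative binomial laws with a common `p`
convolve by adding their shapes. Hence the joint objective is a sum of the single-warehouse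
objectives, each depending only on its own order-up-to level, and the infimum of such a separable
sum over a product of order-up-to sets is the sum of the infima.

The sums are rearranged in `ℝ≥0∞`. Going back to `ℝ`, where a divergent `tsum` is `0`, needs every
expectation to be finite: the value functions are nonnegative and grow at most linearly in
`|x| + k`, while `NB(r, p)` has mass at most `1 / p` and mean at most `r / p ^ 2`.
-/

open scoped ENNReal
open Finset Set

lemma ENNReal.tsum_tsum_mul_mul_add (a b g : ℕ → ℝ≥0∞) :
    ∑' (z : ℕ) (κ : ℕ), a z * b κ * g (z + κ) =
      ∑' n, (∑ q ∈ antidiagonal n, a q.1 * b q.2) * g n := by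
  rw [← ENNReal.tsum_prod, ← HasAntidiagonal.sigmaAntidiagonalEquivProd.tsum_eq
    (fun q : ℕ × ℕ ↦ a q.1 * b q.2 * g (q.1 + q.2)), ENNReal.tsum_sigma']
  refine tsum_congr fun n ↦ ?_
  simp only [HasAntidiagonal.sigmaAntidiagonalEquivProd_apply, tsum_fintype]
  rw [sum_coe_sort (antidiagonal n) (fun q ↦ a q.1 * b q.2 * g (q.1 + q.2)), sum_mul]
  exact sum_congr rfl fun q hq ↦ by rw [mem_antidiagonal.1 hq]

lemma tsum_eq_toReal_tsum_ofReal {α : Type*} {f : α → ℝ} (hf : ∀ a, 0 ≤ f a) :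
    ∑' a, f a = (∑' a, ENNReal.ofReal (f a)).toReal := by
  rw [ENNReal.tsum_toReal_eq fun _ ↦ ENNReal.ofReal_ne_top]
  exact tsum_congr fun a ↦ (ENNReal.toReal_ofReal (hf a)).symm

lemma tsum_tsum_eq_toReal_tsum_tsum_ofReal {α β : Type*} {f : α → β → ℝ} (hf : ∀ a b, 0 ≤ f a b)
    (hfin : ∑' (a) (b), ENNReal.ofReal (f a b) ≠ ∞) :
    ∑' (a) (b), f a b = (∑' (a) (b), ENNReal.ofReal (f a b)).toReal := by
  rw [ENNReal.tsum_toReal_eq fun a ↦ ne_top_of_le_ne_top hfin (ENNReal.le_tsum a)]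
  exact tsum_congr fun a ↦ tsum_eq_toReal_tsum_ofReal (hf a)

lemma iInf_subtype_forall_sum {ι α : Type*} [Fintype ι] (P : ι → α → Prop) (g : ι → α → ℝ)
    (hne : ∀ i, ∃ b, P i b) (hbdd : ∀ i, BddBelow (range fun b : {b // P i b} ↦ g i b)) :
    ⨅ a : {a : ι → α // ∀ i, P i (a i)}, ∑ i, g i (a.1 i) = ∑ i, ⨅ b : {b // P i b}, g i b := by
  choose b₀ hb₀ using hne
  have : ∀ i, Nonempty {b // P i b} := fun i ↦ ⟨⟨b₀ i, hb₀ i⟩⟩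
  have : Nonempty {a : ι → α // ∀ i, P i (a i)} := ⟨⟨b₀, hb₀⟩⟩
  choose m hm using hbdd
  have hbdd' : BddBelow (range fun a : {a : ι → α // ∀ i, P i (a i)} ↦ ∑ i, g i (a.1 i)) :=
    ⟨∑ i, m i, by
      rintro _ ⟨a, rfl⟩
      exact sum_le_sum fun i _ ↦ hm i ⟨⟨a.1 i, a.2 i⟩, rfl⟩⟩
  refine le_antisymm (le_of_forall_pos_le_add fun ε hε ↦ ?_)
    (le_ciInf fun a ↦ sum_le_sum fun i _ ↦ ciInf_le ⟨m i, hm i⟩ ⟨a.1 i, a.2 i⟩)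
  -- take `ε / (|ι| + 1)`-optimal coordinates; the `+ 1` allows `ι` to be empty
  have hδ : 0 < ε / (Fintype.card ι + 1) := by positivity
  choose b hb using fun i ↦
    exists_lt_of_ciInf_lt (lt_add_of_pos_right (⨅ b : {b // P i b}, g i b) hδ)
  calc ⨅ a : {a : ι → α // ∀ i, P i (a i)}, ∑ i, g i (a.1 i)
      ≤ ∑ i, g i (b i).1 := ciInf_le hbdd' ⟨fun i ↦ (b i).1, fun i ↦ (b i).2⟩
    _ ≤ ∑ i, ((⨅ b : {b // P i b}, g i b) + ε / (Fintype.card ι + 1)) :=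
        sum_le_sum fun i _ ↦ (hb i).le
    _ ≤ ∑ i, (⨅ b : {b // P i b}, g i b) + ε := by
        rw [sum_add_distrib, sum_const, card_univ, nsmul_eq_mul]
        gcongr
        rw [mul_div_assoc', div_le_iff₀ (by positivity)]
        nlinarith

namespace SpareParts

section NegativeBinomial

variable {r s p : ℝ}

lemma NB_zero_left (p : ℝ) (z : ℕ) : NB 0 p z = if z = 0 then 1 else 0 := if_pos rfl

lemma NB_apply_zero (hr : 0 ≤ r) (p : ℝ) : NB r p 0 = p ^ r := by
  rcases hr.eq_or_lt with rfl | hr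
  · simp [NB_zero_left]
  · simp [NB, hr.ne', (Real.Gamma_pos_of_pos hr).ne']

lemma NB_pos (hr : 0 < r) (hp : p ∈ Ioo (0 : ℝ) 1) (z : ℕ) : 0 < NB r p z := by
  rw [NB, if_neg hr.ne']
  have := Real.Gamma_pos_of_pos (by positivity : 0 < (z : ℝ) + r)
  have := Real.Gamma_pos_of_pos hr
  have := Real.rpow_pos_of_pos hp.1 r
  have := sub_pos.2 hp.2
  positivity

lemma NB_nonneg (hr : 0 ≤ r) (hp : p ∈ Ioo (0 : ℝ) 1) (z : ℕ) : 0 ≤ NB r p z := by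
  rcases hr.eq_or_lt with rfl | hr
  · rw [NB_zero_left]; split_ifs <;> norm_num
  · exact (NB_pos hr hp z).le

lemma NB_succ (hr : 0 ≤ r) (p : ℝ) (z : ℕ) :
    ((z : ℝ) + 1) * NB r p (z + 1) = (1 - p) * ((z : ℝ) + r) * NB r p z := by
  rcases hr.eq_or_lt with rfl | hr
  · cases z <;> simp [NB_zero_left]
  have hzr : (z : ℝ) + r ≠ 0 := by positivity
  have hΓ : Real.Gamma (((z + 1 : ℕ) : ℝ) + r) = ((z : ℝ) + r) * Real.Gamma ((z : ℝ) + r) := by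
    rw [← Real.Gamma_add_one hzr]; push_cast; ring_nf
  simp only [NB, if_neg hr.ne', hΓ, Nat.factorial_succ, pow_succ]
  have := (Real.Gamma_pos_of_pos hr).ne'
  push_cast
  field_simp

lemma summable_NB_mul_succ (hr : 0 ≤ r) (hp : p ∈ Ioo (0 : ℝ) 1) :
    Summable fun z : ℕ ↦ NB r p z * ((z : ℝ) + 1) := by
  rcases hr.eq_or_lt with rfl | hr'
  · refine summable_of_ne_finset_zero (s := {0}) fun z hz ↦ ?_
    simp [NB_zero_left, show z ≠ 0 by simpa using hz]
  have hpos : ∀ z : ℕ, 0 < NB r p z * ((z : ℝ) + 1) := fun z ↦ by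
    have := NB_pos hr' hp z; positivity
  refine summable_of_ratio_test_tendsto_lt_one (l := 1 - p) (by linarith [hp.1])
    (Eventually.of_forall fun n ↦ (hpos n).ne') ?_
  have hratio : ∀ n : ℕ, (1 - p) * ((r + n) / (1 + n)) * ((2 + n) / (1 + n)) =
      ‖NB r p (n + 1) * (((n + 1 : ℕ) : ℝ) + 1)‖ / ‖NB r p n * ((n : ℝ) + 1)‖ := fun n ↦ by
    rw [Real.norm_of_nonneg (hpos _).le, Real.norm_of_nonneg (hpos _).le]
    have hn : (n : ℝ) + 1 ≠ 0 := by positivity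
    have := (NB_pos hr' hp n).ne'
    have hrec : NB r p (n + 1) = (1 - p) * ((n : ℝ) + r) * NB r p n / ((n : ℝ) + 1) := by
      rw [eq_div_iff hn, mul_comm, NB_succ hr]
    rw [hrec]; push_cast; field_simp; ring
  have hlim : ∀ c : ℝ, Tendsto (fun n : ℕ ↦ (c + n) / (1 + n)) atTop (nhds 1) := fun c ↦ by
    simpa using tendsto_add_mul_div_add_mul_atTop_nhds c 1 1 one_ne_zero
  simpa using ((tendsto_const_nhds (x := 1 - p)).mul (hlim r) |>.mul (hlim 2)).congr hratio

lemma summable_NB (hr : 0 ≤ r) (hp : p ∈ Ioo (0 : ℝ) 1) : Summable (NB r p) :=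
  (summable_NB_mul_succ hr hp).of_nonneg_of_le (NB_nonneg hr hp) fun z ↦
    le_mul_of_one_le_right (NB_nonneg hr hp z) (by simp)

lemma summable_NB_mul_natCast (hr : 0 ≤ r) (hp : p ∈ Ioo (0 : ℝ) 1) :
    Summable fun z : ℕ ↦ NB r p z * z :=
  (summable_NB_mul_succ hr hp).of_nonneg_of_le
    (fun z ↦ mul_nonneg (NB_nonneg hr hp z) z.cast_nonneg)
    fun z ↦ mul_le_mul_of_nonneg_left (by simp) (NB_nonneg hr hp z)

lemma NB_convolution (hr : 0 ≤ r) (hs : 0 ≤ s) (hp : 0 < p) (n : ℕ) :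
    ∑ q ∈ antidiagonal n, NB r p q.1 * NB s p q.2 = NB (r + s) p n := by
  induction n with
  | zero => simp [NB_apply_zero hr, NB_apply_zero hs, NB_apply_zero (add_nonneg hr hs),
      Real.rpow_add hp]
  | succ n ih =>
    refine mul_left_cancel₀ (by positivity : (n : ℝ) + 1 ≠ 0) ?_
    -- both sides satisfy the recurrence of `NB_succ`; on the left split `n + 1 = q.1 + q.2`
    rw [NB_succ (add_nonneg hr hs), ← ih, mul_sum, mul_sum]
    calc ∑ q ∈ antidiagonal (n + 1), ((n : ℝ) + 1) * (NB r p q.1 * NB s p q.2)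
        = ∑ q ∈ antidiagonal (n + 1), (q.1 * NB r p q.1 * NB s p q.2
            + NB r p q.1 * (q.2 * NB s p q.2)) := sum_congr rfl fun q hq ↦ by
          have : (n : ℝ) + 1 = q.1 + q.2 := by exact_mod_cast (mem_antidiagonal.1 hq).symm
          rw [this]; ring
      _ = ∑ q ∈ antidiagonal n, ((1 - p) * (q.1 + r) * NB r p q.1 * NB s p q.2
            + NB r p q.1 * ((1 - p) * (q.2 + s) * NB s p q.2)) := by
          rw [sum_add_distrib, Nat.sum_antidiagonal_succ, Nat.sum_antidiagonal_succ',
            sum_add_distrib]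
          simp only [Nat.cast_zero, Nat.cast_add_one, zero_mul, mul_zero, zero_add]
          congr 1 <;> refine sum_congr rfl fun q _ ↦ ?_
          · rw [NB_succ hr]
          · rw [NB_succ hs]
      _ = ∑ q ∈ antidiagonal n, (1 - p) * ((n : ℝ) + (r + s)) * (NB r p q.1 * NB s p q.2) :=
          sum_congr rfl fun q hq ↦ by
          have : (n : ℝ) = q.1 + q.2 := by exact_mod_cast (mem_antidiagonal.1 hq).symm
          rw [this]; ring

lemma tsum_NB_one (hp : p ∈ Ioo (0 : ℝ) 1) : ∑' z : ℕ, NB 1 p z = 1 := by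
  have h : ∀ z : ℕ, NB 1 p z = p * (1 - p) ^ z := fun z ↦ by
    simp [NB, Real.Gamma_nat_eq_factorial, mul_comm, Nat.factorial_ne_zero]
  rw [tsum_congr h, tsum_mul_left,
    tsum_geometric_of_lt_one (by linarith [hp.2]) (by linarith [hp.1]),
    sub_sub_cancel, mul_inv_cancel₀ hp.1.ne']

lemma NB_le_pow (hr : 0 ≤ r) (hr1 : r ≤ 1) (hp : p ∈ Ioo (0 : ℝ) 1) (z : ℕ) :
    NB r p z ≤ (1 - p) ^ z := by
  induction z with
  | zero => simpa [NB_apply_zero hr] using Real.rpow_le_one hp.1.le hp.2.le hr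
  | succ z ih =>
    refine le_of_mul_le_mul_left ?_ (by positivity : (0 : ℝ) < z + 1)
    have := NB_nonneg hr hp z
    have := sub_pos.2 hp.2
    calc ((z : ℝ) + 1) * NB r p (z + 1) = (1 - p) * ((z : ℝ) + r) * NB r p z := NB_succ hr p z
      _ ≤ (1 - p) * ((z : ℝ) + 1) * (1 - p) ^ z := by gcongr
      _ = ((z : ℝ) + 1) * (1 - p) ^ (z + 1) := by ring

lemma tsum_NB_mul_tsum_NB (hr : 0 ≤ r) (hs : 0 ≤ s) (hp : p ∈ Ioo (0 : ℝ) 1) :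
    (∑' z : ℕ, NB r p z) * ∑' z : ℕ, NB s p z = ∑' z : ℕ, NB (r + s) p z := by
  have habs : ∀ {u : ℝ}, 0 ≤ u → Summable fun z ↦ ‖NB u p z‖ := fun hu ↦ by
    simpa only [Real.norm_eq_abs, summable_abs_iff] using summable_NB hu hp
  rw [tsum_mul_tsum_eq_tsum_sum_antidiagonal_of_summable_norm (habs hr) (habs hs)]
  exact tsum_congr (NB_convolution hr hs hp.1)

lemma tsum_NB_le (hr : 0 ≤ r) (hp : p ∈ Ioo (0 : ℝ) 1) : ∑' z : ℕ, NB r p z ≤ p⁻¹ := by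
  obtain ⟨n, hn⟩ := exists_nat_ge r
  induction n generalizing r with
  | zero =>
    obtain rfl : r = 0 := le_antisymm (by simpa using hn) hr
    simpa [NB_zero_left] using (one_le_inv₀ hp.1).2 hp.2.le
  | succ n ih =>
    rcases le_or_gt r 1 with hr1 | hr1
    · calc ∑' z : ℕ, NB r p z ≤ ∑' z : ℕ, (1 - p) ^ z :=
            (summable_NB hr hp).tsum_le_tsum (NB_le_pow hr hr1 hp)
              (summable_geometric_of_lt_one (by linarith [hp.2]) (by linarith [hp.1]))
        _ = p⁻¹ := by
            rw [tsum_geometric_of_lt_one (by linarith [hp.2]) (by linarith [hp.1]), sub_sub_cancel]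
    · -- `NB r = NB (r - 1) ⋆ NB 1`, and `NB 1` has total mass one
      have h := tsum_NB_mul_tsum_NB (by linarith : 0 ≤ r - 1) zero_le_one hp
      rw [tsum_NB_one hp, mul_one, sub_add_cancel] at h
      rw [← h]
      exact ih (by linarith) (by push_cast at hn; linarith)

lemma tsum_NB_mul_natCast_le (hr : 0 ≤ r) (hp : p ∈ Ioo (0 : ℝ) 1) :
    ∑' z : ℕ, NB r p z * z ≤ r / p ^ 2 := by
  -- summing `NB_succ` over `z` gives `m₁ = (1 - p) (m₁ + r m₀)`
  have hrec : ∑' z : ℕ, NB r p z * z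
      = (1 - p) * (∑' z : ℕ, NB r p z * z + r * ∑' z : ℕ, NB r p z) := by
    rw [← tsum_mul_left,
      ← (summable_NB_mul_natCast hr hp).tsum_add ((summable_NB hr hp).mul_left r),
      ← tsum_mul_left, (summable_NB_mul_natCast hr hp).tsum_eq_zero_add]
    simp only [Nat.cast_zero, mul_zero, zero_add]
    exact tsum_congr fun z ↦ by rw [Nat.cast_add_one, mul_comm, NB_succ hr]; ring
  set m₀ := ∑' z : ℕ, NB r p z
  set m₁ := ∑' z : ℕ, NB r p z * z
  have hpm : p * m₁ = (1 - p) * (r * m₀) := by linear_combination hrec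
  have hm₀ : r * m₀ ≤ r * p⁻¹ := mul_le_mul_of_nonneg_left (tsum_NB_le hr hp) hr
  have hm₀' : 0 ≤ p * (r * m₀) := mul_nonneg hp.1.le (mul_nonneg hr (tsum_nonneg (NB_nonneg hr hp)))
  have := hp.1
  rw [le_div_iff₀ (by positivity)]
  calc m₁ * p ^ 2 = p * m₁ * p := by ring
    _ ≤ r * p⁻¹ * p := mul_le_mul_of_nonneg_right (by linarith) this.le
    _ = r := by field_simp

lemma summable_NB_mul_linear (hr : 0 ≤ r) (hp : p ∈ Ioo (0 : ℝ) 1) (c₀ c₁ : ℝ) :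
    Summable fun z : ℕ ↦ NB r p z * (c₀ + c₁ * z) := by
  simpa [mul_add, mul_left_comm] using
    ((summable_NB hr hp).mul_right c₀).add ((summable_NB_mul_natCast hr hp).mul_left c₁)

lemma tsum_NB_mul_le_of_le_linear (hr : 0 ≤ r) (hp : p ∈ Ioo (0 : ℝ) 1) {g : ℕ → ℝ} {c₀ c₁ : ℝ}
    (hc₀ : 0 ≤ c₀) (hc₁ : 0 ≤ c₁) (hg₀ : ∀ z, 0 ≤ g z) (hg : ∀ z : ℕ, g z ≤ c₀ + c₁ * z) :
    ∑' z : ℕ, NB r p z * g z ≤ (c₀ + c₁ * r) / p ^ 2 := by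
  have hsum := summable_NB_mul_linear hr hp c₀ c₁
  have hle : ∀ z, NB r p z * g z ≤ NB r p z * (c₀ + c₁ * z) :=
    fun z ↦ mul_le_mul_of_nonneg_left (hg z) (NB_nonneg hr hp z)
  have hp2 : p ^ 2 ≤ p := by nlinarith [hp.1, hp.2]
  calc ∑' z : ℕ, NB r p z * g z ≤ ∑' z : ℕ, NB r p z * (c₀ + c₁ * z) :=
        (hsum.of_nonneg_of_le (fun z ↦ mul_nonneg (NB_nonneg hr hp z) (hg₀ z)) hle).tsum_le_tsum
          hle hsum
    _ = c₀ * ∑' z : ℕ, NB r p z + c₁ * ∑' z : ℕ, NB r p z * z := by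
        rw [← tsum_mul_left, ← tsum_mul_left, ← ((summable_NB hr hp).mul_left c₀).tsum_add
          ((summable_NB_mul_natCast hr hp).mul_left c₁)]
        exact tsum_congr fun z ↦ by ring
    _ ≤ c₀ * p⁻¹ + c₁ * (r / p ^ 2) := by
        gcongr
        exacts [tsum_NB_le hr hp, tsum_NB_mul_natCast_le hr hp]
    _ ≤ (c₀ + c₁ * r) / p ^ 2 := by
        rw [add_div, mul_div_assoc, ← div_eq_mul_inv]
        exact add_le_add_left (div_le_div_of_nonneg_left hc₀ (by nlinarith [hp.1]) hp2) _

end NegativeBinomial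

section ENNRealWeights

variable {r s p : ℝ}

noncomputable def ennNB (r p : ℝ) (z : ℕ) : ℝ≥0∞ := ENNReal.ofReal (NB r p z)

lemma ofReal_NB_mul (hr : 0 ≤ r) (hp : p ∈ Ioo (0 : ℝ) 1) (z : ℕ) (c : ℝ) :
    ENNReal.ofReal (NB r p z * c) = ennNB r p z * ENNReal.ofReal c :=
  ENNReal.ofReal_mul (NB_nonneg hr hp z)

lemma tsum_tsum_ennNB_mul_add (hr : 0 ≤ r) (hs : 0 ≤ s) (hp : p ∈ Ioo (0 : ℝ) 1)
    (g : ℕ → ℝ≥0∞) :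
    ∑' (z : ℕ) (κ : ℕ), ennNB r p z * ennNB s p κ * g (z + κ) = ∑' n, ennNB (r + s) p n * g n := by
  rw [ENNReal.tsum_tsum_mul_mul_add]
  refine tsum_congr fun n ↦ congrArg (· * g n) ?_
  rw [ennNB, ← NB_convolution hr hs hp.1,
    ENNReal.ofReal_sum_of_nonneg fun q _ ↦ mul_nonneg (NB_nonneg hr hp _) (NB_nonneg hs hp _)]
  exact sum_congr rfl fun q _ ↦ (ofReal_NB_mul hr hp _ _).symm

lemma tsum_ennNB_zero_mul (p : ℝ) (g : ℕ → ℝ≥0∞) : ∑' n, ennNB 0 p n * g n = g 0 := by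
  rw [tsum_eq_single 0 fun n hn ↦ by simp [ennNB, NB_zero_left, hn]]
  simp [ennNB, NB_zero_left]

lemma tsum_pi_prod_ennNB_mul (hr : 0 ≤ r) (hp : p ∈ Ioo (0 : ℝ) 1) (m : ℕ) (g : ℕ → ℝ≥0∞) :
    ∑' w : Fin m → ℕ, (∏ j, ennNB r p (w j)) * g (∑ j, w j) = ∑' n, ennNB (m * r) p n * g n := by
  induction m generalizing g with
  | zero => simp [tsum_ennNB_zero_mul]
  | succ m ih =>
    rw [← (Fin.consEquiv fun _ ↦ ℕ).tsum_eq, ENNReal.tsum_prod']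
    simp only [Fin.consEquiv_apply, Fin.prod_univ_succ, Fin.sum_univ_succ, Fin.cons_zero,
      Fin.cons_succ]
    calc ∑' (z : ℕ) (v : Fin m → ℕ), (ennNB r p z * ∏ j, ennNB r p (v j)) * g (z + ∑ j, v j)
        = ∑' (z : ℕ) (n : ℕ), ennNB r p z * ennNB (m * r) p n * g (z + n) := by
          refine tsum_congr fun z ↦ ?_
          simp only [mul_assoc, ENNReal.tsum_mul_left, ← ih fun n ↦ g (z + n)]
      _ = ∑' n, ennNB ((m + 1 : ℕ) * r) p n * g n := by
          rw [tsum_tsum_ennNB_mul_add hr (by positivity) hp]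
          push_cast
          ring_nf

lemma tsum_pi_prod_ennNB_mul_apply {N : ℕ} (hr : 0 ≤ r) (hp : p ∈ Ioo (0 : ℝ) 1) (i : Fin N)
    (g : ℕ → ℕ → ℝ≥0∞) :
    ∑' w : Fin N → ℕ, (∏ j, ennNB r p (w j)) * g (w i) (∑ j, w j) =
      ∑' (z : ℕ) (κ : ℕ), ennNB r p z * ennNB ((N - 1) * r) p κ * g z (z + κ) := by
  obtain ⟨m, rfl⟩ := Nat.exists_eq_add_one_of_ne_zero i.pos.ne'
  rw [← (Fin.insertNthEquiv (fun _ ↦ ℕ) i).tsum_eq, ENNReal.tsum_prod']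
  simp only [Fin.insertNthEquiv_apply, Fin.prod_univ_succAbove _ i, Fin.sum_univ_succAbove _ i,
    Fin.insertNth_apply_same, Fin.insertNth_apply_succAbove, Nat.cast_add_one, add_sub_cancel_right]
  refine tsum_congr fun z ↦ ?_
  simp only [mul_assoc, ENNReal.tsum_mul_left, ← tsum_pi_prod_ennNB_mul hr hp m fun n ↦ g z (z + n)]

lemma tsum_ennNB_mul_le (hr : 0 ≤ r) (hp : p ∈ Ioo (0 : ℝ) 1) {g : ℕ → ℝ≥0∞} {c₀ c₁ : ℝ}
    (hc₀ : 0 ≤ c₀) (hc₁ : 0 ≤ c₁) (hg : ∀ z : ℕ, g z ≤ ENNReal.ofReal (c₀ + c₁ * z)) :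
    ∑' z, ennNB r p z * g z ≤ ENNReal.ofReal ((c₀ + c₁ * r) / p ^ 2) :=
  calc ∑' z, ennNB r p z * g z ≤ ∑' z : ℕ, ENNReal.ofReal (NB r p z * (c₀ + c₁ * z)) :=
        ENNReal.tsum_le_tsum fun z ↦ by rw [ofReal_NB_mul hr hp]; gcongr; exact hg z
    _ = ENNReal.ofReal (∑' z : ℕ, NB r p z * (c₀ + c₁ * z)) :=
        (ENNReal.ofReal_tsum_of_nonneg (fun z ↦ mul_nonneg (NB_nonneg hr hp z) (by positivity))
          (summable_NB_mul_linear hr hp c₀ c₁)).symm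
    _ ≤ ENNReal.ofReal ((c₀ + c₁ * r) / p ^ 2) := ENNReal.ofReal_le_ofReal <|
        tsum_NB_mul_le_of_le_linear hr hp hc₀ hc₁ (fun z ↦ by positivity) fun z ↦ le_rfl

lemma tsum_tsum_ennNB_mul_le (hr : 0 ≤ r) (hs : 0 ≤ s) (hp : p ∈ Ioo (0 : ℝ) 1)
    {f : ℕ → ℕ → ℝ≥0∞} {c₀ c₁ c₂ : ℝ} (hc₀ : 0 ≤ c₀) (hc₁ : 0 ≤ c₁) (hc₂ : 0 ≤ c₂)
    (hf : ∀ z κ : ℕ, f z κ ≤ ENNReal.ofReal (c₀ + c₁ * z + c₂ * κ)) :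
    ∑' (z : ℕ) (κ : ℕ), ennNB r p z * ennNB s p κ * f z κ ≤
      ENNReal.ofReal ((c₀ + c₁ * r + c₂ * s) / p ^ 4) := by
  simp only [mul_assoc, ENNReal.tsum_mul_left]
  calc ∑' z, ennNB r p z * ∑' κ, ennNB s p κ * f z κ
      ≤ ∑' z : ℕ, ennNB r p z * ENNReal.ofReal ((c₀ + c₂ * s) / p ^ 2 + c₁ / p ^ 2 * z) :=
        ENNReal.tsum_le_tsum fun z ↦ mul_le_mul_right
          ((tsum_ennNB_mul_le hs hp (by positivity) hc₂ (hf z)).trans_eq (by ring_nf)) _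
    _ ≤ ENNReal.ofReal (((c₀ + c₂ * s) / p ^ 2 + c₁ / p ^ 2 * r) / p ^ 2) :=
        tsum_ennNB_mul_le hr hp (by positivity) (by positivity) fun z ↦ le_rfl
    _ = ENNReal.ofReal ((c₀ + c₁ * r + c₂ * s) / p ^ 4) := by
        have := hp.1.ne'
        congr 1
        field_simp
        ring

lemma tsum_tsum_NB_mul_eq_toReal (hr : 0 ≤ r) (hs : 0 ≤ s) (hp : p ∈ Ioo (0 : ℝ) 1)
    {f : ℕ → ℕ → ℝ} (hf : ∀ z κ, 0 ≤ f z κ)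
    (hfin : ∑' (z : ℕ) (κ : ℕ), ennNB r p z * ennNB s p κ * ENNReal.ofReal (f z κ) ≠ ∞) :
    ∑' (z : ℕ) (κ : ℕ), NB r p z * NB s p κ * f z κ =
      (∑' (z : ℕ) (κ : ℕ), ennNB r p z * ennNB s p κ * ENNReal.ofReal (f z κ)).toReal := by
  have h : ∀ z κ : ℕ, ENNReal.ofReal (NB r p z * NB s p κ * f z κ) =
      ennNB r p z * ennNB s p κ * ENNReal.ofReal (f z κ) := fun z κ ↦ by
    rw [mul_assoc, ofReal_NB_mul hr hp, ofReal_NB_mul hs hp, mul_assoc]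
  simp only [← h] at hfin ⊢
  exact tsum_tsum_eq_toReal_tsum_tsum_ofReal
    (fun z κ ↦ mul_nonneg (mul_nonneg (NB_nonneg hr hp z) (NB_nonneg hs hp κ)) (hf z κ)) hfin

lemma tsum_tsum_NB_mul_le (hr : 0 ≤ r) (hs : 0 ≤ s) (hp : p ∈ Ioo (0 : ℝ) 1)
    {f : ℕ → ℕ → ℝ} {c₀ c₁ c₂ : ℝ} (hc₀ : 0 ≤ c₀) (hc₁ : 0 ≤ c₁) (hc₂ : 0 ≤ c₂)
    (hf₀ : ∀ z κ, 0 ≤ f z κ) (hf : ∀ z κ : ℕ, f z κ ≤ c₀ + c₁ * z + c₂ * κ) :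
    ∑' (z : ℕ) (κ : ℕ), NB r p z * NB s p κ * f z κ ≤ (c₀ + c₁ * r + c₂ * s) / p ^ 4 := by
  have hle := tsum_tsum_ennNB_mul_le hr hs hp hc₀ hc₁ hc₂ fun z κ ↦
    ENNReal.ofReal_le_ofReal (hf z κ)
  rw [tsum_tsum_NB_mul_eq_toReal hr hs hp hf₀ (ne_top_of_le_ne_top ENNReal.ofReal_ne_top hle)]
  exact ENNReal.toReal_le_of_le_ofReal (by have := hp.1; positivity) hle

lemma tsum_pi_prod_NB_mul_sum {N : ℕ} (hr : 0 ≤ r) (hp : p ∈ Ioo (0 : ℝ) 1)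
    (f : Fin N → ℕ → ℕ → ℝ) (hf : ∀ i z n, 0 ≤ f i z n)
    (hfin : ∀ i, ∑' (z : ℕ) (κ : ℕ),
      ennNB r p z * ennNB ((N - 1) * r) p κ * ENNReal.ofReal (f i z (z + κ)) ≠ ∞) :
    ∑' w : Fin N → ℕ, (∏ j, NB r p (w j)) * ∑ i, f i (w i) (∑ j, w j) =
      ∑ i, ∑' (z : ℕ) (κ : ℕ), NB r p z * NB ((N - 1) * r) p κ * f i z (z + κ) := by
  have hprod : ∀ w : Fin N → ℕ, 0 ≤ ∏ j, NB r p (w j) :=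
    fun w ↦ prod_nonneg fun j _ ↦ NB_nonneg hr hp (w j)
  have hofReal : ∀ w : Fin N → ℕ, ENNReal.ofReal ((∏ j, NB r p (w j)) * ∑ i, f i (w i) (∑ j, w j)) =
      ∑ i, (∏ j, ennNB r p (w j)) * ENNReal.ofReal (f i (w i) (∑ j, w j)) := fun w ↦ by
    rw [ENNReal.ofReal_mul (hprod w), ENNReal.ofReal_prod_of_nonneg fun j _ ↦ NB_nonneg hr hp _,
      ENNReal.ofReal_sum_of_nonneg fun i _ ↦ hf _ _ _, mul_sum]
    rfl
  rw [tsum_eq_toReal_tsum_ofReal fun w ↦ mul_nonneg (hprod w) (sum_nonneg fun i _ ↦ hf _ _ _)]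
  have hmarg : ∀ i, ∑' w : Fin N → ℕ, (∏ j, ennNB r p (w j)) * ENNReal.ofReal (f i (w i) (∑ j, w j))
      = ∑' (z : ℕ) (κ : ℕ),
        ennNB r p z * ennNB ((N - 1) * r) p κ * ENNReal.ofReal (f i z (z + κ)) :=
    fun i ↦ tsum_pi_prod_ennNB_mul_apply hr hp i fun z n ↦ ENNReal.ofReal (f i z n)
  simp only [hofReal]
  rw [Summable.tsum_finsetSum fun i _ ↦ ENNReal.summable, sum_congr rfl fun i _ ↦ hmarg i,
    ENNReal.toReal_sum fun i _ ↦ hfin i]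
  refine sum_congr rfl fun i _ ↦
    (tsum_tsum_NB_mul_eq_toReal hr ?_ hp (fun z κ ↦ hf _ _ _) (hfin i)).symm
  exact mul_nonneg (sub_nonneg.2 (Nat.one_le_cast.2 i.pos)) hr

end ENNRealWeights

section Warehouse

variable {α0 β0 cv ch cb : ℝ} {N T : ℕ}

lemma pt_mem_Ioo (hβ0 : 0 < β0) (N t : ℕ) : pt β0 N t ∈ Ioo (0 : ℝ) 1 :=
  ⟨by unfold pt; positivity, by rw [pt, div_lt_one (by positivity)]; linarith⟩

lemma Cost_nonneg (hα0 : 0 ≤ α0) (hβ0 : 0 < β0) (hcv : 0 ≤ cv) (hch : 0 ≤ ch) (hcb : 0 ≤ cb)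
    (t : ℕ) {a x : ℤ} (hxa : x ≤ a) (k : ℕ) : 0 ≤ Cost α0 β0 N cv ch cb t a x k := by
  have hNB := NB_nonneg (by positivity : 0 ≤ α0 + k) (pt_mem_Ioo hβ0 N t)
  have hsum : ∀ y : ℕ → ℝ, (∀ z, 0 ≤ y z) → 0 ≤ ∑' z : ℕ, NB (α0 + k) (pt β0 N t) z * y z :=
    fun y hy ↦ tsum_nonneg fun z ↦ mul_nonneg (hNB z) (hy z)
  have := hsum _ fun z ↦ le_max_right ((a : ℝ) - z) 0
  have := hsum _ fun z ↦ le_max_right ((z : ℝ) - a) 0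
  have : (0 : ℝ) ≤ a - x := sub_nonneg.2 (Int.cast_le.2 hxa)
  unfold Cost
  positivity

lemma Cost_self_le (hα0 : 0 ≤ α0) (hβ0 : 0 < β0) (hch : 0 ≤ ch) (hcb : 0 ≤ cb)
    (t : ℕ) (x : ℤ) (k : ℕ) :
    Cost α0 β0 N cv ch cb t x x k ≤ (ch + cb) * ((|(x : ℝ)| + (α0 + k)) / pt β0 N t ^ 2) := by
  have hr : 0 ≤ α0 + k := by positivity
  have hp := pt_mem_Ioo hβ0 N t
  -- both shortfalls `max (x - z) 0` and `max (z - x) 0` are at most `|x| + z`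
  have hshort : ∀ {g : ℕ → ℝ}, (∀ z, 0 ≤ g z) → (∀ z : ℕ, g z ≤ |(x : ℝ)| + 1 * z) →
      ∑' z : ℕ, NB (α0 + k) (pt β0 N t) z * g z ≤ (|(x : ℝ)| + (α0 + k)) / pt β0 N t ^ 2 :=
    fun hg₀ hg ↦ (tsum_NB_mul_le_of_le_linear hr hp (abs_nonneg _) zero_le_one hg₀ hg).trans_eq
      (by rw [one_mul])
  have h₁ := hshort (fun z ↦ le_max_right ((x : ℝ) - z) 0) fun z ↦
    max_le (by linarith [le_abs_self (x : ℝ), z.cast_nonneg (α := ℝ)]) (by positivity)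
  have h₂ := hshort (fun z ↦ le_max_right ((z : ℝ) - x) 0) fun z ↦
    max_le (by linarith [neg_abs_le (x : ℝ)]) (by positivity)
  rw [Cost, sub_self, mul_zero, zero_add, add_mul]
  gcongr

lemma EZK_nonneg (hα0 : 0 ≤ α0) (hβ0 : 0 < β0) (hN : 1 ≤ N) (t k : ℕ) {f : ℕ → ℕ → ℝ}
    (hf : ∀ z κ, 0 ≤ f z κ) : 0 ≤ EZK α0 β0 N t k f := by
  have hr : 0 ≤ α0 + k := by positivity
  have hs : 0 ≤ ((N : ℝ) - 1) * (α0 + k) := mul_nonneg (by simpa using hN) hr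
  have hp := pt_mem_Ioo hβ0 N t
  exact tsum_nonneg fun z ↦ tsum_nonneg fun κ ↦
    mul_nonneg (mul_nonneg (NB_nonneg hr hp z) (NB_nonneg hs hp κ)) (hf z κ)

variable {w : ℕ → ℤ → ℕ → ℝ}

def IsWarehouseValue (α0 β0 : ℝ) (N T : ℕ) (cv ch cb : ℝ) (w : ℕ → ℤ → ℕ → ℝ) : Prop :=
  (∀ x k, w T x k = 0) ∧
  ∀ t, t < T → ∀ x k, w t x k = ⨅ a : {a : ℤ // x ≤ a},
    (Cost α0 β0 N cv ch cb t a.1 x k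
      + EZK α0 β0 N t k (fun z κ => w (t + 1) (a.1 - (z : ℤ)) (k + z + κ)))

lemma Cost_add_EZK_nonneg (hα0 : 0 ≤ α0) (hβ0 : 0 < β0) (hN : 1 ≤ N) (hcv : 0 ≤ cv)
    (hch : 0 ≤ ch) (hcb : 0 ≤ cb) {v : ℤ → ℕ → ℝ} (hv : ∀ y n, 0 ≤ v y n) (t : ℕ) {a x : ℤ}
    (hxa : x ≤ a) (k : ℕ) :
    0 ≤ Cost α0 β0 N cv ch cb t a x k + EZK α0 β0 N t k (fun z κ => v (a - z) (k + z + κ)) :=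
  add_nonneg (Cost_nonneg hα0 hβ0 hcv hch hcb t hxa k)
    (EZK_nonneg hα0 hβ0 hN t k fun _ _ ↦ hv _ _)

lemma IsWarehouseValue.nonneg (hα0 : 0 ≤ α0) (hβ0 : 0 < β0) (hN : 1 ≤ N) (hcv : 0 ≤ cv)
    (hch : 0 ≤ ch) (hcb : 0 ≤ cb) (hw : IsWarehouseValue α0 β0 N T cv ch cb w) :
    ∀ t ≤ T, ∀ x k, 0 ≤ w t x k := by
  intro t ht
  induction ht using Nat.decreasingInduction with
  | self => simp [hw.1]
  | of_succ t ht ih =>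
    intro x k
    rw [hw.2 t ht]
    exact Real.iInf_nonneg fun a ↦ Cost_add_EZK_nonneg hα0 hβ0 hN hcv hch hcb ih t a.2 k

lemma le_linear_shift {g : ℤ → ℕ → ℝ} {L : ℝ} (hL : 0 ≤ L)
    (hg : ∀ x k, g x k ≤ L * (|(x : ℝ)| + k + 1)) (b : ℤ) (k z κ : ℕ) :
    g (b - z) (k + z + κ) ≤ L * (|(b : ℝ)| + k + 1) + 2 * L * z + L * κ := by
  refine (hg _ _).trans ?_
  have : L * |(b : ℝ) - z| ≤ L * (|(b : ℝ)| + z) := by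
    gcongr
    simpa using abs_sub (b : ℝ) z
  push_cast
  linarith

lemma IsWarehouseValue.exists_le_linear_of_succ (hα0 : 0 ≤ α0) (hβ0 : 0 < β0) (hN : 1 ≤ N)
    (hcv : 0 ≤ cv) (hch : 0 ≤ ch) (hcb : 0 ≤ cb) (hw : IsWarehouseValue α0 β0 N T cv ch cb w)
    {t : ℕ} (ht : t < T) (hw₀ : ∀ x k, 0 ≤ w (t + 1) x k) {L : ℝ} (hL : 0 ≤ L)
    (hwL : ∀ x k, w (t + 1) x k ≤ L * (|(x : ℝ)| + k + 1)) :
    ∃ L', 0 ≤ L' ∧ ∀ x k, w t x k ≤ L' * (|(x : ℝ)| + k + 1) := by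
  set p := pt β0 N t
  have hp : p ∈ Ioo (0 : ℝ) 1 := pt_mem_Ioo hβ0 N t
  have := hp.1
  refine ⟨(ch + cb) * (α0 + 2) / p ^ 2 + L * (1 + (N + 1) * (α0 + 1)) / p ^ 4, by positivity,
    fun x k ↦ ?_⟩
  set D := |(x : ℝ)| + k + 1
  have hr : 0 ≤ α0 + k := by positivity
  have hs : 0 ≤ ((N : ℝ) - 1) * (α0 + k) := mul_nonneg (by simpa using hN) hr
  have hxD : |(x : ℝ)| ≤ D := by simp only [D]; linarith [k.cast_nonneg (α := ℝ)]
  have hrD : α0 + k ≤ (α0 + 1) * D := by nlinarith [abs_nonneg (x : ℝ)]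
  -- not ordering (`a = x`) is feasible
  have hxx : w t x k ≤ Cost α0 β0 N cv ch cb t x x k
      + EZK α0 β0 N t k (fun z κ => w (t + 1) (x - z) (k + z + κ)) := by
    rw [hw.2 t ht]
    refine ciInf_le ⟨0, ?_⟩ (⟨x, le_rfl⟩ : {a : ℤ // x ≤ a})
    rintro _ ⟨a, rfl⟩
    exact Cost_add_EZK_nonneg hα0 hβ0 hN hcv hch hcb hw₀ t a.2 k
  have hE : EZK α0 β0 N t k (fun z κ => w (t + 1) (x - z) (k + z + κ))
      ≤ (L * D + 2 * L * (α0 + k) + L * ((N - 1) * (α0 + k))) / p ^ 4 :=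
    tsum_tsum_NB_mul_le hr hs hp (by positivity) (by positivity) hL (fun _ _ ↦ hw₀ _ _)
      (le_linear_shift hL hwL x k)
  calc w t x k
      ≤ (ch + cb) * ((|(x : ℝ)| + (α0 + k)) / p ^ 2)
        + (L * D + 2 * L * (α0 + k) + L * ((N - 1) * (α0 + k))) / p ^ 4 :=
        hxx.trans (add_le_add (Cost_self_le hα0 hβ0 hch hcb t x k) hE)
    _ ≤ (ch + cb) * ((α0 + 2) * D / p ^ 2) + L * (1 + (N + 1) * (α0 + 1)) * D / p ^ 4 := by
        have : L * ((N + 1) * (α0 + k)) ≤ L * ((N + 1) * ((α0 + 1) * D)) := by gcongr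
        gcongr ?_ * (?_ / _) + ?_ / _
        · linarith
        · linarith
    _ = _ := by ring

lemma IsWarehouseValue.exists_le_linear (hα0 : 0 ≤ α0) (hβ0 : 0 < β0) (hN : 1 ≤ N)
    (hcv : 0 ≤ cv) (hch : 0 ≤ ch) (hcb : 0 ≤ cb) (hw : IsWarehouseValue α0 β0 N T cv ch cb w) :
    ∀ t ≤ T, ∃ L, 0 ≤ L ∧ ∀ x k, w t x k ≤ L * (|(x : ℝ)| + k + 1) := by
  intro t ht
  induction ht using Nat.decreasingInduction with
  | self => exact ⟨0, le_rfl, fun x k ↦ by simp [hw.1]⟩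
  | of_succ t ht ih =>
    obtain ⟨L, hL, hwL⟩ := ih
    exact hw.exists_le_linear_of_succ hα0 hβ0 hN hcv hch hcb ht
      (hw.nonneg hα0 hβ0 hN hcv hch hcb (t + 1) ht) hL hwL

lemma IsWarehouseValue.expectation_ne_top (hα0 : 0 ≤ α0) (hβ0 : 0 < β0) (hN : 1 ≤ N)
    (hcv : 0 ≤ cv) (hch : 0 ≤ ch) (hcb : 0 ≤ cb) (hw : IsWarehouseValue α0 β0 N T cv ch cb w)
    {t : ℕ} (ht : t < T) (b : ℤ) (k : ℕ) :
    ∑' (z : ℕ) (κ : ℕ), ennNB (α0 + k) (pt β0 N t) z * ennNB ((N - 1) * (α0 + k)) (pt β0 N t) κ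
      * ENNReal.ofReal (w (t + 1) (b - z) (k + (z + κ))) ≠ ∞ := by
  obtain ⟨L, hL, hwL⟩ := hw.exists_le_linear hα0 hβ0 hN hcv hch hcb (t + 1) ht
  have hr : 0 ≤ α0 + k := by positivity
  have hs : 0 ≤ ((N : ℝ) - 1) * (α0 + k) := mul_nonneg (by simpa using hN) hr
  refine ne_top_of_le_ne_top ENNReal.ofReal_ne_top <|
    tsum_tsum_ennNB_mul_le hr hs (pt_mem_Ioo hβ0 N t) (c₀ := L * (|(b : ℝ)| + k + 1))
      (c₁ := 2 * L) (by positivity) (by positivity) hL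
      fun z κ ↦ ENNReal.ofReal_le_ofReal ?_
  rw [← add_assoc]
  exact le_linear_shift hL hwL b k z κ

end Warehouse

end SpareParts

open SpareParts in
theorem decomposition_spare_parts_general
    (α0 β0 : ℝ) (hα0 : 0 < α0) (hβ0 : 0 < β0)
    (N T : ℕ)
    (cv ch cb : Fin N → ℝ) (hcv : ∀ i, 0 ≤ cv i) (hch : ∀ i, 0 < ch i) (hcb : ∀ i, 0 < cb i)
    -- joint value function
    (V : ℕ → (Fin N → ℤ) → ℕ → ℝ)
    (hVT : ∀ x k, V T x k = 0)
    (hV : ∀ t, t < T → ∀ x k,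
      V t x k = ⨅ a : {a : Fin N → ℤ // ∀ i, x i ≤ a i},
        ((∑ i, Cost α0 β0 N (cv i) (ch i) (cb i) t (a.1 i) (x i) k)
         + ∑' z : Fin N → ℕ,
             (∏ i, NB (α0 + (k : ℝ)) (pt β0 N t) (z i)) *
               V (t + 1) (fun i => a.1 i - (z i : ℤ)) (k + ∑ i, z i)))
    -- single-warehouse value functions
    (W : Fin N → ℕ → ℤ → ℕ → ℝ)
    (hWT : ∀ i x k, W i T x k = 0)
    (hW : ∀ i t, t < T → ∀ x k,
      W i t x k = ⨅ a : {a : ℤ // x ≤ a},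
        (Cost α0 β0 N (cv i) (ch i) (cb i) t a.1 x k
          + EZK α0 β0 N t k (fun z κ => W i (t + 1) (a.1 - (z : ℤ)) (k + z + κ)))) :
    ∀ t ≤ T, ∀ (x : Fin N → ℤ) (k : ℕ), V t x k = ∑ i, W i t (x i) k := by
  have hWi (i : Fin N) : IsWarehouseValue α0 β0 N T (cv i) (ch i) (cb i) (W i) := ⟨hWT i, hW i⟩
  have hN (i : Fin N) : 1 ≤ N := i.pos
  have hW₀ (i : Fin N) := (hWi i).nonneg hα0.le hβ0 (hN i) (hcv i) (hch i).le (hcb i).le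
  intro t ht
  induction ht using Nat.decreasingInduction with
  | self => simp [hVT, hWT]
  | of_succ t ht ih =>
    intro x k
    -- by induction `V (t + 1)` is separable, so its expectation splits into the marginal ones
    have hexp (a : Fin N → ℤ) : ∑' z : Fin N → ℕ, (∏ i, NB (α0 + k) (pt β0 N t) (z i)) *
          V (t + 1) (fun i => a i - z i) (k + ∑ i, z i) =
        ∑ i, EZK α0 β0 N t k (fun z κ => W i (t + 1) (a i - z) (k + z + κ)) := by
      simp only [ih, EZK, add_assoc]
      exact tsum_pi_prod_NB_mul_sum (by positivity) (pt_mem_Ioo hβ0 N t)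
        (fun i z n ↦ W i (t + 1) (a i - z) (k + n)) (fun i _ _ ↦ hW₀ i (t + 1) ht _ _)
        fun i ↦ (hWi i).expectation_ne_top hα0.le hβ0 (hN i) (hcv i) (hch i).le (hcb i).le ht _ k
    rw [hV t ht]
    simp only [hexp, ← sum_add_distrib]
    have hsplit := iInf_subtype_forall_sum (fun i b ↦ x i ≤ b)
      (fun i b ↦ Cost α0 β0 N (cv i) (ch i) (cb i) t b (x i) k
        + EZK α0 β0 N t k fun z κ ↦ W i (t + 1) (b - z) (k + z + κ))
      (fun i ↦ ⟨x i, le_rfl⟩) fun i ↦ ⟨0, by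
        rintro _ ⟨b, rfl⟩
        exact Cost_add_EZK_nonneg hα0.le hβ0 (hN i) (hcv i) (hch i).le (hcb i).le
          (hW₀ i (t + 1) ht) t b.2 k⟩
    beta_reduce at hsplit
    rw [hsplit]
    exact sum_congr rfl fun i _ ↦ (hW i t ht (x i) k).symm

/-- Decomposition of the joint `N`-warehouse value function into `N`
two-dimensional single-warehouse value functions. -/
theorem decomposition_spare_parts
    (α0 β0 : ℝ) (hα0 : 0 < α0) (hβ0 : 0 < β0)
    (N T : ℕ) (hN : 1 ≤ N) (hT : 1 ≤ T)
    (cv ch cb : Fin N → ℝ) (hcv : ∀ i, 0 ≤ cv i) (hch : ∀ i, 0 < ch i) (hcb : ∀ i, 0 < cb i)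
    -- joint value function
    (V : ℕ → (Fin N → ℤ) → ℕ → ℝ)
    (hVT : ∀ x k, V T x k = 0)
    (hV : ∀ t, t < T → ∀ x k,
      V t x k = ⨅ a : {a : Fin N → ℤ // ∀ i, x i ≤ a i},
        ((∑ i, Cost α0 β0 N (cv i) (ch i) (cb i) t (a.1 i) (x i) k)
         + ∑' z : Fin N → ℕ,
             (∏ i, NB (α0 + (k : ℝ)) (pt β0 N t) (z i)) *
               V (t + 1) (fun i => a.1 i - (z i : ℤ)) (k + ∑ i, z i)))
    -- single-warehouse value functions
    (W : Fin N → ℕ → ℤ → ℕ → ℝ)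
    (hWT : ∀ i x k, W i T x k = 0)
    (hW : ∀ i t, t < T → ∀ x k,
      W i t x k = ⨅ a : {a : ℤ // x ≤ a},
        (Cost α0 β0 N (cv i) (ch i) (cb i) t a.1 x k
          + EZK α0 β0 N t k (fun z κ => W i (t + 1) (a.1 - (z : ℤ)) (k + z + κ)))) :
    ∀ t ≤ T, ∀ (x : Fin N → ℤ) (k : ℕ), V t x k = ∑ i, W i t (x i) k :=
  decomposition_spare_parts_general α0 β0 hα0 hβ0 N T cv ch cb hcv hch hcb V hVT hV W hWT hW
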